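/- arXiv:1211.6484 — 7 statements merged into one kernel-verified Lean document; each statement's English description precedes it below -/
import Mathlib

section
/- Let F be a field, F ∈ F[x₁,…,xₙ] a polynomial with deg(F) ≤ d₁+⋯+dₙ, and A₁,…,Aₙ ⊆ F finite subsets with |Aᵢ| = dᵢ+1. Then the coefficient of the monomial x₁^{d₁}⋯xₙ^{dₙ} in F equals ∑_{c₁∈A₁}⋯∑_{cₙ∈Aₙ} F(c₁,…,cₙ)/(φ₁'(c₁)⋯φₙ'(cₙ)), where φᵢ(z) = ∏_{a∈Aᵢ}(z−a). -/
/-!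
Both sides are linear in `P`, so it suffices to treat monomials. For a monomial the grid sum
factors into one-variable sums `∑_{c ∈ Aᵢ} c^k / φᵢ'(c)`, and by Lagrange interpolation
at the `dᵢ + 1` nodes of `Aᵢ` such a sum is the coefficient of `X^{dᵢ}` in `X^k` when `k ≤ dᵢ`.
The degree bound forces every monomial of `P` other than `∏ xᵢ^{dᵢ}` to have some exponent
`kᵢ < dᵢ`, which kills its term.
-/

open Finset Polynomial

theorem Finset.exists_lt_of_sum_le_of_ne {ι M : Type*} [Fintype ι] [AddCommMonoid M]
    [LinearOrder M] [IsOrderedCancelAddMonoid M] {f g : ι → M}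
    (hsum : ∑ i, f i ≤ ∑ i, g i) (hne : f ≠ g) : ∃ i, f i < g i := by
  by_contra! hge
  refine hne (funext fun i => ?_)
  have hsum_eq : ∑ i, g i = ∑ i, f i := le_antisymm (sum_le_sum fun i _ => hge i) hsum
  exact ((sum_eq_sum_iff_of_le fun i _ => hge i).mp hsum_eq i (mem_univ i)).symm

theorem Polynomial.coeff_card_sub_one_eq_sum_div_eval_derivative {K : Type*} [Field K]
    (A : Finset K) {p : K[X]} (hp : p.degree < #A) :
    p.coeff (#A - 1) =
      ∑ c ∈ A, p.eval c / (derivative (∏ a ∈ A, (X - C a))).eval c := by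
  classical
  rw [Lagrange.coeff_eq_sum (v := fun a => a) Function.injective_id.injOn hp]
  refine sum_congr rfl fun c hc => ?_
  rw [← Lagrange.nodal_eq A fun a => a,
    Lagrange.eval_nodal_derivative_eval_node_eq (v := fun a => a) hc, Lagrange.eval_nodal]

theorem MvPolynomial.sum_piFinset_eval_mul_prod {σ R : Type*} [Fintype σ] [DecidableEq σ]
    [CommSemiring R] (P : MvPolynomial σ R) (A : σ → Finset R) (w : σ → R → R) :
    ∑ c ∈ Fintype.piFinset A, eval c P * ∏ i, w i (c i) =
      ∑ m ∈ P.support, coeff m P * ∏ i, ∑ x ∈ A i, x ^ m i * w i x := by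
  simp only [eval_eq', sum_mul, prod_univ_sum, prod_mul_distrib, mul_sum, mul_assoc]
  exact sum_comm

/-- Effective Combinatorial Nullstellensatz (Lasoń; Karasev–Petrov):
the coefficient of `∏ xᵢ^{dᵢ}` in a polynomial of total degree at most `∑ dᵢ`
is given by the interpolation sum over any grid `A₁ × ⋯ × Aₙ` with `|Aᵢ| = dᵢ + 1`. -/
theorem effective_combinatorial_nullstellensatz
    {F : Type*} [Field F] (n : ℕ) (d : Fin n → ℕ) (A : Fin n → Finset F)
    (hA : ∀ i, (A i).card = d i + 1)
    (P : MvPolynomial (Fin n) F)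
    (hdeg : P.totalDegree ≤ ∑ i, d i) :
    MvPolynomial.coeff (Finsupp.equivFunOnFinite.symm d) P =
      ∑ c ∈ Fintype.piFinset A,
        MvPolynomial.eval c P /
          ∏ i, Polynomial.eval (c i)
            (Polynomial.derivative (∏ a ∈ A i, (Polynomial.X - Polynomial.C a))) := by
  set φ' := fun i => derivative (∏ a ∈ A i, (X - C a))
  have hweight : ∀ i k, k ≤ d i →
      ∑ x ∈ A i, x ^ k * ((φ' i).eval x)⁻¹ = if d i = k then 1 else 0 := by
    intro i k hk
    have hk_lt : (X ^ k : F[X]).degree < #(A i) := by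
      rw [degree_X_pow, hA]; exact_mod_cast Nat.lt_succ_of_le hk
    simpa [hA, coeff_X_pow, div_eq_mul_inv] using
      (coeff_card_sub_one_eq_sum_div_eval_derivative (A i) hk_lt).symm
  simp only [div_eq_mul_inv, ← prod_inv_distrib]
  rw [MvPolynomial.sum_piFinset_eval_mul_prod P A fun i x => ((φ' i).eval x)⁻¹,
    sum_eq_single (Finsupp.equivFunOnFinite.symm d)]
  · simp [hweight _ _ le_rfl]
  · intro m hm hmd
    obtain ⟨i, hi⟩ : ∃ i, m i < d i :=
      exists_lt_of_sum_le_of_ne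
        ((Finsupp.degree_eq_sum m).symm.trans_le ((MvPolynomial.le_totalDegree hm).trans hdeg))
        fun h => hmd (Finsupp.equivFunOnFinite.eq_symm_apply.mpr h)
    rw [prod_eq_zero (mem_univ i) ((hweight i _ hi.le).trans (if_neg hi.ne')), mul_zero]
  · intro hd
    rw [MvPolynomial.notMem_support_iff.mp hd, zero_mul]
end

section
/- Let a₁,…,aₙ be positive integers, σ = a₁+⋯+aₙ, σᵢ = a₁+⋯+a_{i−1} (so σ₁ = 0). Suppose integers α₁,…,αₙ satisfy 0 ≤ αᵢ ≤ σ−aᵢ for all i, and for every pair i < j either α_j − αᵢ ≥ aᵢ or αᵢ − α_j ≥ a_j + 1. Then αᵢ = σᵢ for every i. -/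
/-!
Read `[αᵢ, αᵢ + aᵢ)` as a block of length `aᵢ`. The gap condition makes the blocks pairwise
disjoint, and since they lie in `[0, σ)` and have total length `σ`, they tile `[0, σ)`. In a tiling
every block starting at a positive point is immediately preceded by another block, and the gap
condition forbids that neighbour from having a larger index (it would need a gap of at least `1`).
So the blocks appear in the order of their indices, and `αᵢ` is the total length of the blocks
before the `i`-th one, namely `σᵢ`.
-/

open Finset Function

variable {ι : Type*} {a α : ι → ℤ} {s : ℤ}

theorem separated_of_gap [LinearOrder ι]
    (hgap : ∀ i j, i < j → a i ≤ α j - α i ∨ a j + 1 ≤ α i - α j) {i j : ι} (hij : i ≠ j) :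
    α i + a i ≤ α j ∨ α j + a j ≤ α i := by
  rcases hij.lt_or_gt with h | h
  · rcases hgap i j h with h' | h' <;> omega
  · rcases hgap j i h with h' | h' <;> omega

theorem injective_of_separated (ha : ∀ i, 0 < a i)
    (hsep : ∀ i j, i ≠ j → α i + a i ≤ α j ∨ α j + a j ≤ α i) : Injective α := by
  intro i j hij
  by_contra hne
  have := ha i
  have := ha j
  rcases hsep i j hne with h | h <;> omega

theorem card_biUnion_Ico_of_separated [DecidableEq ι] (u : Finset ι) (ha : ∀ i ∈ u, 0 ≤ a i)
    (hsep : ∀ i j, i ≠ j → α i + a i ≤ α j ∨ α j + a j ≤ α i) :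
    ((u.biUnion fun i => Ico (α i) (α i + a i)).card : ℤ) = ∑ i ∈ u, a i := by
  rw [card_biUnion, Nat.cast_sum]
  · refine sum_congr rfl fun i hi => ?_
    rw [Int.card_Ico, add_sub_cancel_left, Int.toNat_of_nonneg (ha i hi)]
  · intro i _ j _ hij
    rw [onFun, disjoint_left]
    intro t hti htj
    rw [mem_Ico] at hti htj
    rcases hsep i j hij with h | h <;> omega

theorem exists_mem_Ico_of_separated [Fintype ι] (ha : ∀ i, 0 ≤ a i)
    (hsep : ∀ i j, i ≠ j → α i + a i ≤ α j ∨ α j + a j ≤ α i) (hlb : ∀ i, 0 ≤ α i)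
    (hub : ∀ i, α i + a i ≤ ∑ j, a j) {t : ℤ} (ht₀ : 0 ≤ t) (ht : t < ∑ j, a j) :
    ∃ i, t ∈ Ico (α i) (α i + a i) := by
  classical
  have hsub : univ.biUnion (fun i => Ico (α i) (α i + a i)) ⊆ Ico 0 (∑ j, a j) := by
    intro x hx
    simp only [mem_biUnion, mem_univ, true_and, mem_Ico] at hx ⊢
    obtain ⟨i, h₁, h₂⟩ := hx
    exact ⟨(hlb i).trans h₁, h₂.trans_le (hub i)⟩
  have hcard : (Ico 0 (∑ j, a j)).card ≤ (univ.biUnion fun i => Ico (α i) (α i + a i)).card := by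
    have := card_biUnion_Ico_of_separated univ (fun i _ => ha i) hsep
    rw [Int.card_Ico, sub_zero, ← this, Int.toNat_natCast]
  have hmem : t ∈ univ.biUnion fun i => Ico (α i) (α i + a i) := by
    rw [eq_of_subset_of_card_le hsub hcard]
    exact mem_Ico.mpr ⟨ht₀, ht⟩
  obtain ⟨i, -, hi⟩ := mem_biUnion.mp hmem
  exact ⟨i, hi⟩

theorem eq_sum_filter_lt_of_cover [Fintype ι] (ha : ∀ i, 0 ≤ a i)
    (hsep : ∀ i j, i ≠ j → α i + a i ≤ α j ∨ α j + a j ≤ α i)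
    (hlb : ∀ i, 0 ≤ α i) (hle : ∀ i, α i ≤ s)
    (hcover : ∀ t, 0 ≤ t → t < s → ∃ i, t ∈ Ico (α i) (α i + a i)) (i : ι) :
    α i = ∑ j ∈ univ.filter (fun j => α j < α i), a j := by
  classical
  have hsplit : Ico 0 (α i) =
      (univ.filter fun j => α j < α i).biUnion fun j => Ico (α j) (α j + a j) := by
    ext t
    simp only [mem_Ico, mem_biUnion, mem_filter, mem_univ, true_and]
    constructor
    · rintro ⟨ht₀, hti⟩
      obtain ⟨j, hj⟩ := hcover t ht₀ (hti.trans_le (hle i))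
      rw [mem_Ico] at hj
      exact ⟨j, by omega, hj⟩
    · rintro ⟨j, hji, htj⟩
      have := hlb j
      have := ha i
      rcases hsep j i (ne_of_apply_ne α hji.ne) with h | h <;> omega
  have := card_biUnion_Ico_of_separated (univ.filter fun j => α j < α i) (fun j _ => ha j) hsep
  rwa [← hsplit, Int.card_Ico, sub_zero, Int.toNat_of_nonneg (hlb i)] at this

section Tiling

variable [LinearOrder ι]

theorem exists_lt_add_eq_of_cover (ha : ∀ i, 0 < a i)
    (hgap : ∀ i j, i < j → a i ≤ α j - α i ∨ a j + 1 ≤ α i - α j)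
    (hcover : ∀ t, 0 ≤ t → t < s → ∃ i, t ∈ Ico (α i) (α i + a i))
    {i : ι} (hpos : 0 < α i) (his : α i ≤ s) : ∃ m < i, α m + a m = α i := by
  obtain ⟨m, hm⟩ := hcover (α i - 1) (by omega) (by omega)
  rw [mem_Ico] at hm
  have hai := ha i
  have ham := ha m
  have hmi : m ≠ i := by
    rintro rfl
    omega
  have hend : α m + a m = α i := by
    rcases separated_of_gap hgap hmi with h | h <;> omega
  refine ⟨m, hmi.lt_or_gt.resolve_right fun him => ?_, hend⟩
  rcases hgap i m him with h | h <;> omega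

theorem monotone_of_cover (ha : ∀ i, 0 < a i)
    (hgap : ∀ i j, i < j → a i ≤ α j - α i ∨ a j + 1 ≤ α i - α j)
    (hlb : ∀ i, 0 ≤ α i) (hle : ∀ i, α i ≤ s)
    (hcover : ∀ t, 0 ≤ t → t < s → ∃ i, t ∈ Ico (α i) (α i + a i)) : Monotone α := by
  suffices h : ∀ i j, α j < α i → j < i from
    fun i j hij => le_of_not_gt fun hji => (h i j hji).not_ge hij
  intro i
  induction i using (measure fun i => (α i).toNat).wf.induction with
  | _ i ih =>
  intro j hji
  obtain ⟨m, hmi, hm⟩ :=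
    exists_lt_add_eq_of_cover ha hgap hcover ((hlb j).trans_lt hji) (hle i)
  rcases lt_or_ge (α j) (α m) with hjm | hmj
  · have hlt : (α m).toNat < (α i).toNat := by
      have := ha m
      have := hlb m
      omega
    exact (ih m hlt j hjm).trans hmi
  · obtain rfl : j = m := by
      by_contra hne
      have := ha j
      rcases separated_of_gap hgap hne with h | h <;> omega
    exact hmi

end Tiling

/-- Claim 1 (combinatorial core) of the Károlyi–Nagy proof of the q-Dyson theorem:
if `0 ≤ αᵢ ≤ σ - aᵢ` and for each pair `i < j` either `α_j - αᵢ ≥ aᵢ` or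
`αᵢ - α_j ≥ a_j + 1`, then `αᵢ = σᵢ = a₁ + ⋯ + a_{i-1}` for every `i`. -/
theorem q_dyson_exponent_rigidity
    (n : ℕ) (a : Fin n → ℤ) (ha : ∀ i, 0 < a i)
    (α : Fin n → ℤ)
    (hlb : ∀ i, 0 ≤ α i) (hub : ∀ i, α i ≤ (∑ j, a j) - a i)
    (hgap : ∀ i j, i < j → a i ≤ α j - α i ∨ a j + 1 ≤ α i - α j) :
    ∀ i, α i = ∑ j ∈ Finset.Iio i, a j := by
  have hsep : ∀ i j, i ≠ j → α i + a i ≤ α j ∨ α j + a j ≤ α i :=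
    fun _ _ => separated_of_gap hgap
  have hle : ∀ i, α i ≤ ∑ j, a j := fun i => by linarith [hub i, ha i]
  have hcover : ∀ t, 0 ≤ t → t < ∑ j, a j → ∃ i, t ∈ Ico (α i) (α i + a i) :=
    fun _ => exists_mem_Ico_of_separated (fun i => (ha i).le) hsep hlb
      (fun i => by linarith [hub i])
  have hmono : StrictMono α := (monotone_of_cover ha hgap hlb hle hcover).strictMono_of_injective
    (injective_of_separated ha hsep)
  intro i
  rw [eq_sum_filter_lt_of_cover (fun i => (ha i).le) hsep hlb hle hcover i]
  simp only [hmono.lt_iff_lt, filter_gt_eq_Iio]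
end

section
/- Let a₁,…,aₙ be positive integers, σ = ∑aᵢ, σᵢ = ∑_{j<i} a_j, and let q be an indeterminate over ℚ. Define F(x₁,…,xₙ) = ∏_{1≤i<j≤n} [∏_{t=0}^{aᵢ−1}(x_j − xᵢ q^t) · ∏_{t=1}^{a_j}(xᵢ − x_j q^t)]. If c₁,…,cₙ with cᵢ ∈ {1, q, q², …, q^{σ−aᵢ}} satisfy F(c₁,…,cₙ) ≠ 0 in ℚ(q), then cᵢ = q^{σᵢ} for all i. -/
/-!
Write `cᵢ = q^{mᵢ}`. A linear factor of `F` vanishes at `c` as soon as two exponents collide, so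
`F(c) ≠ 0` forces, for `i < j`, either `mᵢ + aᵢ ≤ mⱼ` or `mⱼ + aⱼ < mᵢ`. Hence the blocks
`[mᵢ, mᵢ + aᵢ)` are pairwise disjoint, and as `mᵢ ≤ σ - aᵢ` they tile `[0, σ)`. The strict
inequality in the second alternative leaves a gap after a block standing left of a block of smaller
index; the block filling that gap is again such a block, further right. So the blocks appear in
index order, which pins `mᵢ = σᵢ`.
-/

open Finset MvPolynomial

noncomputable def qDysonPoly {ι R : Type*} [LinearOrder ι] [Fintype ι] [CommRing R]
    (q : R) (a : ι → ℕ) : MvPolynomial ι R :=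
  ∏ p ∈ univ.filter (fun p : ι × ι => p.1 < p.2),
    ((∏ t ∈ range (a p.1), (X p.2 - C (q ^ t) * X p.1)) *
     (∏ t ∈ range (a p.2), (X p.1 - C (q ^ (t + 1)) * X p.2)))

theorem exponent_ne_of_eval_qDysonPoly_ne_zero {ι R : Type*} [LinearOrder ι] [Fintype ι]
    [CommRing R] {q : R} {a m : ι → ℕ} (hF : eval (fun i => q ^ m i) (qDysonPoly q a) ≠ 0)
    {i j : ι} (hij : i < j) :
    (∀ t < a i, m j ≠ m i + t) ∧ (∀ t < a j, m i ≠ m j + t + 1) := by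
  have hpair := mt (prod_eq_zero (mem_filter.mpr ⟨mem_univ (i, j), hij⟩)) (by
    rw [qDysonPoly, map_prod] at hF; exact hF)
  rw [map_mul, map_prod, map_prod] at hpair
  refine ⟨fun t ht heq => ?_, fun t ht heq => ?_⟩ <;> apply hpair
  · refine mul_eq_zero_of_left (prod_eq_zero (mem_range.mpr ht) ?_) _
    simp only [map_sub, map_mul, eval_X, eval_C, heq, pow_add]
    ring
  · refine mul_eq_zero_of_right _ (prod_eq_zero (mem_range.mpr ht) ?_)
    simp only [map_sub, map_mul, eval_X, eval_C, heq, pow_add]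
    ring

theorem add_le_or_add_lt_of_forall_ne {k l a b : ℕ} (h₁ : ∀ t < a, l ≠ k + t)
    (h₂ : ∀ t < b, k ≠ l + t + 1) : k + a ≤ l ∨ l + b < k := by
  by_contra! h
  rcases le_or_gt k l with hkl | hlk
  · exact h₁ (l - k) (by omega) (by omega)
  · exact h₂ (k - l - 1) (by omega) (by omega)

section Blocks

open Function

variable {ι : Type*} {a m : ι → ℕ}

theorem pairwise_disjoint_Ico_of_separated [LinearOrder ι]
    (hsep : ∀ i j, i < j → m i + a i ≤ m j ∨ m j + a j < m i) :
    Pairwise (Disjoint on fun i => Ico (m i) (m i + a i)) := by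
  intro i j hij
  simp only [onFun, disjoint_left, mem_Ico]
  rcases hij.lt_or_gt with h | h <;> rcases hsep _ _ h with h' | h' <;> omega

theorem exists_mem_Ico_of_pairwise_disjoint [Fintype ι]
    (hdisj : Pairwise (Disjoint on fun i => Ico (m i) (m i + a i)))
    (hle : ∀ i, m i + a i ≤ ∑ j, a j) (x : ℕ) (hx : x < ∑ j, a j) :
    ∃ k, x ∈ Ico (m k) (m k + a k) := by
  classical
  have hunion : univ.biUnion (fun i => Ico (m i) (m i + a i)) = range (∑ j, a j) := by
    refine eq_of_subset_of_card_le (fun y hy => ?_) ?_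
    · obtain ⟨k, -, hk⟩ := mem_biUnion.mp hy
      have := hle k
      simp only [mem_Ico, mem_range] at hk ⊢
      omega
    · rw [card_biUnion (hdisj.set_pairwise _)]
      simp
  rw [← mem_range, ← hunion] at hx
  simpa using hx

variable [LinearOrder ι] [Fintype ι]

theorem add_le_of_lt_of_separated
    (hsep : ∀ i j, i < j → m i + a i ≤ m j ∨ m j + a j < m i) (ha : ∀ i, 0 < a i)
    (hle : ∀ i, m i + a i ≤ ∑ j, a j)
    (hcover : ∀ x < ∑ j, a j, ∃ k, x ∈ Ico (m k) (m k + a k)) (i j : ι) (hij : i < j) :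
    m i + a i ≤ m j := by
  classical
  by_contra hji
  -- The block starting right after `j₀` is again inverted with `i₀`, contradicting maximality.
  let inversions := univ.filter fun p : ι × ι => p.1 < p.2 ∧ m p.2 + a p.2 < m p.1
  obtain ⟨⟨i₀, j₀⟩, hinv, hmax⟩ := inversions.exists_max_image (fun p => m p.2)
    ⟨(i, j), mem_filter.mpr ⟨mem_univ _, hij, (hsep i j hij).resolve_left hji⟩⟩
  obtain ⟨-, hij₀, hinv₀⟩ := mem_filter.mp hinv
  dsimp only at hij₀ hinv₀ hmax
  obtain ⟨k, hk⟩ := hcover (m j₀ + a j₀) (by have := hle i₀; omega)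
  rw [mem_Ico] at hk
  have hjk : j₀ < k := by
    rcases lt_trichotomy k j₀ with h | rfl | h
    · rcases hsep k j₀ h with h' | h' <;> omega
    · omega
    · exact h
  have hmk : m k = m j₀ + a j₀ := by rcases hsep j₀ k hjk with h' | h' <;> omega
  have hik : i₀ < k := hij₀.trans hjk
  have hmk_le := hmax (i₀, k) (mem_filter.mpr ⟨mem_univ _, hik,
    (hsep i₀ k hik).resolve_left (by omega)⟩)
  have := ha j₀
  dsimp only at hmk_le
  omega

theorem eq_sum_Iio_of_monotone_blocks [LocallyFiniteOrderBot ι]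
    (hmono : ∀ i j, i < j → m i + a i ≤ m j)
    (hdisj : Pairwise (Disjoint on fun i => Ico (m i) (m i + a i)))
    (hle : ∀ i, m i + a i ≤ ∑ j, a j)
    (hcover : ∀ x < ∑ j, a j, ∃ k, x ∈ Ico (m k) (m k + a k)) (i : ι) :
    m i = ∑ j ∈ Iio i, a j := by
  classical
  have hrange : range (m i) = (Iio i).biUnion fun j => Ico (m j) (m j + a j) := by
    ext x
    simp only [mem_range, mem_biUnion, mem_Iio, mem_Ico]
    constructor
    · intro hx
      obtain ⟨k, hk⟩ := hcover x (by have := hle i; omega)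
      rw [mem_Ico] at hk
      refine ⟨k, lt_of_not_ge fun hik => ?_, hk⟩
      rcases hik.eq_or_lt with rfl | h
      · omega
      · have := hmono i k h; omega
    · rintro ⟨k, hki, hk⟩
      have := hmono k i hki
      omega
  simpa [card_biUnion (hdisj.set_pairwise _)] using congr_arg card hrange

end Blocks

/-- Vanishing claim for the q-Dyson polynomial
`F = ∏_{i<j} [∏_{t=0}^{aᵢ-1}(x_j - xᵢ qᵗ) · ∏_{t=1}^{a_j}(xᵢ - x_j qᵗ)]`:
if each `cᵢ` lies in the geometric grid `{1, q, …, q^{σ-aᵢ}}` and `F(c) ≠ 0`,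
then `cᵢ = q^{σᵢ}` where `σᵢ = a₁ + ⋯ + a_{i-1}`. -/
theorem q_dyson_vanishing
    (n : ℕ) (a : Fin n → ℕ) (ha : ∀ i, 0 < a i)
    (c : Fin n → RatFunc ℚ)
    (hc : ∀ i, ∃ m : ℕ, m ≤ (∑ j, a j) - a i ∧ c i = RatFunc.X ^ m)
    (hF : MvPolynomial.eval c
        (∏ p ∈ Finset.univ.filter (fun p : Fin n × Fin n => p.1 < p.2),
          ((∏ t ∈ Finset.range (a p.1), (X p.2 - C ((RatFunc.X : RatFunc ℚ) ^ t) * X p.1)) *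
           (∏ t ∈ Finset.range (a p.2), (X p.1 - C ((RatFunc.X : RatFunc ℚ) ^ (t + 1)) * X p.2))))
      ≠ 0) :
    ∀ i, c i = RatFunc.X ^ (∑ j ∈ Finset.Iio i, a j) := by
  choose m hm hcm using hc
  obtain rfl : c = fun i => RatFunc.X ^ m i := funext hcm
  have hle : ∀ i, m i + a i ≤ ∑ j, a j := fun i => by
    have := single_le_sum (fun j _ => (a j).zero_le) (mem_univ i); have := hm i; omega
  have hsep : ∀ i j, i < j → m i + a i ≤ m j ∨ m j + a j < m i := fun i j hij =>
    have h := exponent_ne_of_eval_qDysonPoly_ne_zero (a := a) hF hij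
    add_le_or_add_lt_of_forall_ne h.1 h.2
  have hdisj := pairwise_disjoint_Ico_of_separated hsep
  have hcover := exists_mem_Ico_of_pairwise_disjoint hdisj hle
  have hmono := add_le_of_lt_of_separated hsep ha hle hcover
  exact fun i => congrArg (RatFunc.X ^ ·) (eq_sum_Iio_of_monotone_blocks hmono hdisj hle hcover i)
end

section
/- For nonnegative integers a₁,…,aₙ with partial sums σᵢ = a₁+⋯+a_{i−1} (σ₁ = 0), the identity ∑_{i=1}^n (n−i)·(aᵢσᵢ + C(aᵢ,2)) = ∑_{i=1}^n C(σᵢ,2) holds, where C(m,2) = m(m−1)/2. -/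
/-!
Writing `σ_k = ∑_{j<k} a_j`, the summand `a_i σ_i + C(a_i, 2)` is exactly the increment
`C(σ_{i+1}, 2) - C(σ_i, 2)`, so `C(σ_k, 2)` is the sum of the first `k` summands. Summing this
over `k < n` counts the `i`-th summand once for every `k > i`, that is `n - 1 - i` times.
-/

open Finset

theorem Nat.add_choose_two (x y : ℕ) :
    (x + y).choose 2 = x.choose 2 + y.choose 2 + x * y := by
  rw [Nat.add_choose_eq, Finset.Nat.sum_antidiagonal_eq_sum_range_succ_mk]
  simp only [sum_range_succ, sum_range_zero, Nat.reduceSub, Nat.choose_zero_right,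
    Nat.choose_one_right]
  ring

theorem Finset.choose_two_sum {ι : Type*} [LinearOrder ι] (s : Finset ι) (f : ι → ℕ) :
    (∑ i ∈ s, f i).choose 2 = ∑ i ∈ s, (f i * ∑ j ∈ s with j < i, f j + (f i).choose 2) := by
  induction s using Finset.induction_on_max with
  | empty => simp
  | insert x s hlt ih =>
    have hx : x ∉ s := fun h => lt_irrefl x (hlt x h)
    have hfilter : {j ∈ s | j < x} = s := filter_true_of_mem hlt
    have hrest : ∑ i ∈ s, (f i * ∑ j ∈ insert x s with j < i, f j + (f i).choose 2) =
        ∑ i ∈ s, (f i * ∑ j ∈ s with j < i, f j + (f i).choose 2) :=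
      sum_congr rfl fun i hi => by rw [filter_insert, if_neg (hlt i hi).not_gt]
    rw [sum_insert hx, sum_insert hx, filter_insert, if_neg (lt_irrefl x), hfilter, hrest,
      Nat.add_choose_two, ih]
    ring

theorem Finset.sum_sum_Iio_eq_sum_card_Ioi_smul {ι M : Type*} [LinearOrder ι] [Fintype ι]
    [LocallyFiniteOrderBot ι] [LocallyFiniteOrderTop ι] [AddCommMonoid M] (f : ι → M) :
    ∑ k, ∑ i ∈ Iio k, f i = ∑ i, #(Ioi i) • f i := by
  rw [sum_comm' (t' := univ) (s' := fun i => Ioi i) (by simp)]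
  simp only [sum_const]

-- Zero-based indexing: the paper's weight `n - i` for `i = 1, …, n` becomes `n - 1 - i`.
/-- Claim 2 of Károlyi–Nagy:
`∑ᵢ (n - i)·(aᵢ σᵢ + C(aᵢ, 2)) = ∑ᵢ C(σᵢ, 2)` where `σᵢ = a₁ + ⋯ + a_{i-1}`
(zero-based indexing: the weight `n - i` for `i = 1, …, n` becomes `n - 1 - i`). -/
theorem q_dyson_claim2
    (n : ℕ) (a : Fin n → ℕ) :
    ∑ i : Fin n, (n - 1 - (i : ℕ)) * (a i * (∑ j ∈ Finset.Iio i, a j) + (a i).choose 2) =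
      ∑ i : Fin n, (∑ j ∈ Finset.Iio i, a j).choose 2 := by
  simp_rw [← Fin.card_Ioi, ← smul_eq_mul, ← sum_sum_Iio_eq_sum_card_Ioi_smul, choose_two_sum,
    Iio_filter_lt]
  refine sum_congr rfl fun k _ => sum_congr rfl fun i hi => ?_
  rw [min_eq_right (mem_Iio.1 hi).le, smul_eq_mul]
end

section
/- Let q be an indeterminate, a₁,…,aₙ positive integers, σ = ∑aᵢ, σᵢ = ∑_{j<i}a_j, and φᵢ(z) = (z−1)(z−q)⋯(z−q^{σ−aᵢ}). Then φᵢ'(q^{σᵢ}) = (−1)^{σᵢ} q^{τᵢ} (q)_{σᵢ} (q)_{σ−σ_{i+1}}, where τᵢ = C(σᵢ,2) + σᵢ(σ−σ_{i+1}) and (q)_k = (1−q)(1−q²)⋯(1−q^k). -/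
/-!
Since `φᵢ` is a product of distinct linear factors `X - q^t` and `q^{σᵢ}` is one of its roots,
`φᵢ'(q^{σᵢ}) = ∏_{t ≠ σᵢ} (q^{σᵢ} - q^t)`. The factors with `t < σᵢ` are
`-q^t (1 - q^{σᵢ - t})`, giving `(-1)^{σᵢ} q^{C(σᵢ,2)} (q)_{σᵢ}`, and the `σ - σ_{i+1}` factors
with `t > σᵢ` are `q^{σᵢ} (1 - q^{t - σᵢ})`, giving `q^{σᵢ(σ - σ_{i+1})} (q)_{σ - σ_{i+1}}`.
-/

open Finset Polynomial

/-- `(q)_k = (1-q)(1-q²)⋯(1-qᵏ)` in `ℚ(q)`. -/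
noncomputable def qPoch (k : ℕ) : RatFunc ℚ :=
  ∏ t ∈ Finset.range k, (1 - (RatFunc.X : RatFunc ℚ) ^ (t + 1))

def qPochhammer {R : Type*} [CommRing R] (q : R) (k : ℕ) : R :=
  ∏ t ∈ range k, (1 - q ^ (t + 1))

theorem Polynomial.eval_prod_X_sub_C_derivative {R ι : Type*} [CommRing R] [DecidableEq ι]
    (s : Finset ι) (r : ι → R) {i : ι} (hi : i ∈ s) :
    eval (r i) (derivative (∏ j ∈ s, (X - C (r j)))) = ∏ j ∈ s.erase i, (r i - r j) := by
  rw [← mul_prod_erase s _ hi, derivative_mul, derivative_X_sub_C]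
  simp [eval_prod]

theorem Finset.range_erase_eq_range_union_Ico {s N : ℕ} (hs : s ≤ N) :
    (range N).erase s = range s ∪ Ico (s + 1) N := by
  ext t
  simp only [mem_erase, mem_range, mem_union, mem_Ico]
  omega

section qPochhammer

variable {R : Type*} [CommRing R]

theorem prod_range_pow_sub_pow (q : R) (s : ℕ) :
    ∏ t ∈ range s, (q ^ s - q ^ t) = (-1) ^ s * q ^ s.choose 2 * qPochhammer q s := by
  have factor : ∀ t ∈ range s, q ^ s - q ^ t = -1 * q ^ t * (1 - q ^ (s - 1 - t + 1)) := by
    intro t ht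
    obtain ⟨d, rfl⟩ := Nat.exists_eq_add_of_lt (mem_range.1 ht)
    rw [show t + d + 1 - 1 - t + 1 = d + 1 by omega]
    ring
  rw [prod_congr rfl factor, prod_mul_distrib, prod_mul_distrib, prod_const, card_range,
    prod_pow_eq_pow_sum, sum_range_id, ← Nat.choose_two_right, qPochhammer,
    prod_range_reflect (fun t => 1 - q ^ (t + 1))]

theorem prod_range_pow_sub_pow_add (q : R) (s k : ℕ) :
    ∏ t ∈ range k, (q ^ s - q ^ (s + 1 + t)) = q ^ (s * k) * qPochhammer q k := by
  have factor : ∀ t ∈ range k, q ^ s - q ^ (s + 1 + t) = q ^ s * (1 - q ^ (t + 1)) := by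
    intro t _
    rw [add_assoc, pow_add]
    ring
  rw [prod_congr rfl factor, prod_mul_distrib, prod_const, card_range, pow_mul, qPochhammer]

theorem eval_derivative_prod_X_sub_C_pow (q : R) (s k : ℕ) :
    eval (q ^ s) (derivative (∏ t ∈ range (s + k + 1), (X - C (q ^ t)))) =
      (-1) ^ s * q ^ (s.choose 2 + s * k) * qPochhammer q s * qPochhammer q k := by
  have hdisj : Disjoint (range s) (Ico (s + 1) (s + k + 1)) :=
    disjoint_left.2 fun t ht ht' => by simp only [mem_range, mem_Ico] at ht ht'; omega
  rw [eval_prod_X_sub_C_derivative _ (q ^ ·) (mem_range.2 (by omega)),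
    range_erase_eq_range_union_Ico (by omega), prod_union hdisj, prod_Ico_eq_prod_range,
    show s + k + 1 - (s + 1) = k by omega, prod_range_pow_sub_pow, prod_range_pow_sub_pow_add,
    pow_add]
  ring

end qPochhammer

theorem q_dyson_derivative_eval_general
    (n : ℕ) (a : Fin n → ℕ) (i : Fin n) :
    Polynomial.eval ((RatFunc.X : RatFunc ℚ) ^ (∑ j ∈ Finset.Iio i, a j))
        (Polynomial.derivative
          (∏ t ∈ Finset.range ((∑ j, a j) - a i + 1),
            (Polynomial.X - Polynomial.C ((RatFunc.X : RatFunc ℚ) ^ t)))) =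
      (-1) ^ (∑ j ∈ Finset.Iio i, a j) *
        (RatFunc.X : RatFunc ℚ) ^
          ((∑ j ∈ Finset.Iio i, a j).choose 2 +
            (∑ j ∈ Finset.Iio i, a j) * ((∑ j, a j) - (∑ j ∈ Finset.Iic i, a j))) *
        qPoch (∑ j ∈ Finset.Iio i, a j) *
        qPoch ((∑ j, a j) - (∑ j ∈ Finset.Iic i, a j)) := by
  set s := ∑ j ∈ Iio i, a j
  have hIic : ∑ j ∈ Iic i, a j = s + a i := by
    rw [← Iio_insert, sum_insert notMem_Iio_self, add_comm]
  obtain ⟨k, hk⟩ : ∃ k, ∑ j, a j = s + a i + k :=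
    Nat.exists_eq_add_of_le (hIic ▸ sum_le_sum_of_subset (subset_univ _))
  rw [hIic, hk, show s + a i + k - a i + 1 = s + k + 1 by omega,
    show s + a i + k - (s + a i) = k by omega]
  exact eval_derivative_prod_X_sub_C_pow _ s k

/-- Evaluation of the derivative of the grid polynomial
`φᵢ(z) = (z-1)(z-q)⋯(z-q^{σ-aᵢ})` at `q^{σᵢ}`:
`φᵢ'(q^{σᵢ}) = (-1)^{σᵢ} q^{τᵢ} (q)_{σᵢ} (q)_{σ-σ_{i+1}}` with
`τᵢ = C(σᵢ,2) + σᵢ(σ-σ_{i+1})`, where `σᵢ = ∑_{j<i} a_j`, `σ = ∑ a_j`. -/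
theorem q_dyson_derivative_eval
    (n : ℕ) (a : Fin n → ℕ) (ha : ∀ i, 0 < a i) (i : Fin n) :
    Polynomial.eval ((RatFunc.X : RatFunc ℚ) ^ (∑ j ∈ Finset.Iio i, a j))
        (Polynomial.derivative
          (∏ t ∈ Finset.range ((∑ j, a j) - a i + 1),
            (Polynomial.X - Polynomial.C ((RatFunc.X : RatFunc ℚ) ^ t)))) =
      (-1) ^ (∑ j ∈ Finset.Iio i, a j) *
        (RatFunc.X : RatFunc ℚ) ^
          ((∑ j ∈ Finset.Iio i, a j).choose 2 +
            (∑ j ∈ Finset.Iio i, a j) * ((∑ j, a j) - (∑ j ∈ Finset.Iic i, a j))) *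
        qPoch (∑ j ∈ Finset.Iio i, a j) *
        qPoch ((∑ j, a j) - (∑ j ∈ Finset.Iic i, a j)) :=
  q_dyson_derivative_eval_general n a i
end

section
/- Let q be an indeterminate, a₁,…,aₙ positive integers, σᵢ = ∑_{j<i}a_j, σ = σ_{n+1}. Define F(x₁,…,xₙ) = ∏_{1≤i<j≤n}[∏_{t=0}^{aᵢ−1}(x_j − xᵢq^t)·∏_{t=1}^{a_j}(xᵢ − x_jq^t)]. Then F(q^{σ₁},…,q^{σₙ}) = (−1)^u q^v ∏_{i=1}^n (q)_{σᵢ}(q)_{σ−σᵢ}/(q)_{aᵢ}, where u = ∑_i (n−i)aᵢ and v = ∑_i [(n−i)aᵢσᵢ + (n−i)C(aᵢ,2) + σᵢ(σ−σ_{i+1})]. -/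
/-!
At `xᵢ = q^{σᵢ}` the factor of `F` belonging to a pair `i < j` is a sign, a power of `q`
and the ratio `(q)_{σ_{j+1} - σᵢ} / (q)_{σⱼ - σ_{i+1}}`. The signs and the powers of `q`
are summed by exchanging the order of summation over the pairs, and the ratios telescope.
-/

open Finset MvPolynomial

namespace QDyson

section CommRing

variable {R : Type*} [CommRing R] (q : R)

theorem prod_range_pow_sub_pow_mul_pow (s c m : ℕ) :
    ∏ t ∈ range c, (q ^ (s + c + m) - q ^ t * q ^ s) =
      (-1) ^ c * q ^ (c * s + c.choose 2) * ∏ t ∈ range c, (1 - q ^ (m + t + 1)) := by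
  have hfactor : ∀ t ∈ range c, q ^ (s + c + m) - q ^ t * q ^ s =
      -1 * q ^ (s + t) * (1 - q ^ (m + (c - 1 - t) + 1)) := by
    intro t ht
    rw [show s + c + m = s + t + (m + (c - 1 - t) + 1) by grind, pow_add, pow_add q s t]
    ring
  have hreflect := prod_range_reflect (fun t => 1 - q ^ (m + t + 1)) c
  rw [prod_congr rfl hfactor, prod_mul_distrib, prod_mul_distrib, hreflect, prod_const,
    card_range, prod_pow_eq_pow_sum, sum_add_distrib, sum_const, card_range, smul_eq_mul,
    sum_range_id, ← Nat.choose_two_right]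

theorem prod_range_pow_sub_pow_succ_mul_pow (s m b : ℕ) :
    ∏ t ∈ range b, (q ^ s - q ^ (t + 1) * q ^ (s + m)) =
      q ^ (s * b) * ∏ t ∈ range b, (1 - q ^ (m + t + 1)) := by
  have hfactor : ∀ t ∈ range b,
      q ^ s - q ^ (t + 1) * q ^ (s + m) = q ^ s * (1 - q ^ (m + t + 1)) := by
    intro t _
    rw [mul_sub, mul_one, ← pow_add, ← pow_add, show s + (m + t + 1) = t + 1 + (s + m) by ring]
  rw [prod_congr rfl hfactor, prod_mul_distrib, prod_const, card_range, pow_mul]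

end CommRing

section Telescope

variable {K : Type*} [Field K]

theorem prod_range_prod_range_div_telescope (D : ℕ → ℕ → K) (hD : ∀ i j, D i j ≠ 0)
    (hdiag : ∀ i, D i i = 1) (N : ℕ) :
    ∏ j ∈ range N, ∏ i ∈ range j, D i (j + 1) / D (i + 1) j =
      ∏ i ∈ range N, D 0 i * D i N / D i (i + 1) := by
  induction N with
  | zero => simp
  | succ N ih =>
    have hshift : ∏ i ∈ range N, D i N = D 0 N * ∏ i ∈ range N, D (i + 1) N := by
      calc ∏ i ∈ range N, D i N = ∏ i ∈ range (N + 1), D i N := by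
            rw [prod_range_succ, hdiag, mul_one]
        _ = D 0 N * ∏ i ∈ range N, D (i + 1) N := by rw [prod_range_succ', mul_comm]
    rw [prod_range_succ, ih, prod_range_succ, prod_div_distrib, prod_div_distrib,
      prod_div_distrib, prod_mul_distrib, prod_mul_distrib, hshift]
    have hne : ∀ f g : ℕ → ℕ, ∏ i ∈ range N, D (f i) (g i) ≠ 0 :=
      fun f g => prod_ne_zero_iff.2 fun i _ => hD _ _
    field_simp [hD, hne]

end Telescope

theorem one_sub_X_pow_ne_zero {k : ℕ} (hk : k ≠ 0) :
    (1 : RatFunc ℚ) - RatFunc.X ^ k ≠ 0 := by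
  rw [sub_ne_zero, ne_comm, ← RatFunc.algebraMap_X, ← map_pow,
    ← map_one (algebraMap (Polynomial ℚ) _), (RatFunc.algebraMap_injective ℚ).ne_iff]
  intro h
  simpa [hk] using congrArg Polynomial.natDegree h

theorem qPoch_ne_zero (k : ℕ) : qPoch k ≠ 0 :=
  prod_ne_zero_iff.2 fun t _ => one_sub_X_pow_ne_zero t.succ_ne_zero

theorem qPoch_zero : qPoch 0 = 1 := prod_range_zero _

theorem qPoch_add (m c : ℕ) :
    qPoch (m + c) = qPoch m * ∏ t ∈ range c, (1 - (RatFunc.X : RatFunc ℚ) ^ (m + t + 1)) :=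
  prod_range_add _ m c

local notation "q" => (RatFunc.X : RatFunc ℚ)

-- `xᵢ = q^s`, `xⱼ = q^{s+c+m}`, `aᵢ = c`, `aⱼ = b`
theorem eval_pair_factor (s c m b : ℕ) :
    (∏ t ∈ range c, (q ^ (s + c + m) - q ^ t * q ^ s)) *
        ∏ t ∈ range b, (q ^ s - q ^ (t + 1) * q ^ (s + c + m)) =
      (-1) ^ c * q ^ (c * s + c.choose 2 + s * b) * (qPoch (m + c + b) / qPoch m) := by
  rw [prod_range_pow_sub_pow_mul_pow, add_assoc s c m, prod_range_pow_sub_pow_succ_mul_pow,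
    qPoch_add, qPoch_add, add_comm c m, pow_add]
  field_simp [qPoch_ne_zero]
  ring

def partialSum (a : ℕ → ℕ) (i : ℕ) : ℕ := ∑ j ∈ range i, a j

theorem partialSum_zero (a : ℕ → ℕ) : partialSum a 0 = 0 := rfl

theorem partialSum_succ (a : ℕ → ℕ) (i : ℕ) : partialSum a (i + 1) = partialSum a i + a i :=
  sum_range_succ a i

theorem partialSum_mono (a : ℕ → ℕ) : Monotone (partialSum a) :=
  fun _ _ h => sum_le_sum_of_subset (range_subset_range.2 h)

theorem eval_pair_factor_partialSum (a : ℕ → ℕ) {i j : ℕ} (hij : i < j) :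
    (∏ t ∈ range (a i), (q ^ partialSum a j - q ^ t * q ^ partialSum a i)) *
        ∏ t ∈ range (a j), (q ^ partialSum a i - q ^ (t + 1) * q ^ partialSum a j) =
      (-1) ^ a i * q ^ (a i * partialSum a i + (a i).choose 2 + partialSum a i * a j) *
        (qPoch (partialSum a (j + 1) - partialSum a i) /
          qPoch (partialSum a j - partialSum a (i + 1))) := by
  obtain ⟨m, hm⟩ := Nat.exists_eq_add_of_le (partialSum_mono a (Nat.succ_le_of_lt hij))
  rw [partialSum_succ] at hm ⊢
  rw [hm, eval_pair_factor, partialSum_succ]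
  congr 4 <;> omega

theorem sum_range_sum_range_lt_eq_smul {M : Type*} [AddCommMonoid M] (g : ℕ → M) (N : ℕ) :
    ∑ j ∈ range N, ∑ i ∈ range j, g i = ∑ i ∈ range N, (N - 1 - i) • g i := by
  simp only [range_eq_Ico, ← sum_Ico_Ico_comm']
  refine sum_congr rfl fun i _ => ?_
  rw [sum_const, Nat.card_Ico, Nat.sub_sub, add_comm 1 i]

theorem sum_range_sum_range_lt_mul (h a : ℕ → ℕ) (N : ℕ) :
    ∑ j ∈ range N, ∑ i ∈ range j, h i * a j =
      ∑ i ∈ range N, h i * (partialSum a N - partialSum a (i + 1)) := by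
  simp only [range_eq_Ico, ← sum_Ico_Ico_comm']
  refine sum_congr rfl fun i hi => ?_
  rw [← mul_sum, partialSum, partialSum, range_eq_Ico, range_eq_Ico,
    ← sum_Ico_consecutive a (Nat.zero_le (i + 1)) (mem_Ico.1 hi).2, Nat.add_sub_cancel_left]

theorem eval_prod_pair_factors (a : ℕ → ℕ) (N : ℕ) :
    ∏ j ∈ range N, ∏ i ∈ range j,
        ((∏ t ∈ range (a i), (q ^ partialSum a j - q ^ t * q ^ partialSum a i)) *
          ∏ t ∈ range (a j), (q ^ partialSum a i - q ^ (t + 1) * q ^ partialSum a j)) =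
      (-1) ^ (∑ i ∈ range N, (N - 1 - i) * a i) *
        q ^ (∑ i ∈ range N,
          ((N - 1 - i) * (a i * partialSum a i) + (N - 1 - i) * (a i).choose 2 +
            partialSum a i * (partialSum a N - partialSum a (i + 1)))) *
        ∏ i ∈ range N, (qPoch (partialSum a i) * qPoch (partialSum a N - partialSum a i) /
          qPoch (a i)) := by
  rw [prod_congr rfl fun j (_ : j ∈ range N) => prod_congr rfl fun i (hi : i ∈ range j) =>
    eval_pair_factor_partialSum a (mem_range.1 hi)]
  simp only [prod_mul_distrib, prod_pow_eq_pow_sum, sum_add_distrib]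
  rw [sum_range_sum_range_lt_eq_smul, sum_range_sum_range_lt_eq_smul,
    sum_range_sum_range_lt_eq_smul, sum_range_sum_range_lt_mul,
    prod_range_prod_range_div_telescope (fun i j => qPoch (partialSum a j - partialSum a i))
      (fun _ _ => qPoch_ne_zero _) (fun _ => by rw [Nat.sub_self, qPoch_zero])]
  simp only [smul_eq_mul, partialSum_zero, Nat.sub_zero, partialSum_succ, Nat.add_sub_cancel_left]

@[to_additive]
theorem prod_Iio_val {M : Type*} [CommMonoid M] {n : ℕ} (f : ℕ → M) (i : Fin n) :
    ∏ j ∈ Iio i, f j = ∏ j ∈ range i, f j := by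
  rw [← Nat.Iio_eq_range, ← Fin.map_valEmbedding_Iio, prod_map]
  rfl

theorem prod_filter_fst_lt_snd {M : Type*} [CommMonoid M] (n : ℕ) (G : ℕ → ℕ → M) :
    ∏ p ∈ univ.filter (fun p : Fin n × Fin n => p.1 < p.2), G p.1 p.2 =
      ∏ j ∈ range n, ∏ i ∈ range j, G i j := by
  rw [prod_filter, Fintype.prod_prod_type, prod_comm, ← Fin.prod_univ_eq_prod_range]
  refine prod_congr rfl fun j _ => ?_
  rw [← prod_filter, filter_gt_eq_Iio, prod_Iio_val (G · j)]

end QDyson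

/-- Indices are zero-based, so the paper's `n - i` appears as `n - 1 - i`. -/
theorem q_dyson_F_eval_general
    (n : ℕ) (a : Fin n → ℕ) :
    MvPolynomial.eval (fun i => (RatFunc.X : RatFunc ℚ) ^ (∑ j ∈ Finset.Iio i, a j))
        (∏ p ∈ Finset.univ.filter (fun p : Fin n × Fin n => p.1 < p.2),
          ((∏ t ∈ Finset.range (a p.1), (X p.2 - C ((RatFunc.X : RatFunc ℚ) ^ t) * X p.1)) *
           (∏ t ∈ Finset.range (a p.2), (X p.1 - C ((RatFunc.X : RatFunc ℚ) ^ (t + 1)) * X p.2)))) =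
      (-1) ^ (∑ i : Fin n, (n - 1 - (i : ℕ)) * a i) *
        (RatFunc.X : RatFunc ℚ) ^
          (∑ i : Fin n,
            ((n - 1 - (i : ℕ)) * (a i * (∑ j ∈ Finset.Iio i, a j)) +
              (n - 1 - (i : ℕ)) * (a i).choose 2 +
              (∑ j ∈ Finset.Iio i, a j) * ((∑ j, a j) - (∑ j ∈ Finset.Iic i, a j)))) *
        ∏ i : Fin n,
          (qPoch (∑ j ∈ Finset.Iio i, a j) * qPoch ((∑ j, a j) - (∑ j ∈ Finset.Iio i, a j)) /
            qPoch (a i)) := by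
  obtain ⟨b, rfl⟩ : ∃ b : ℕ → ℕ, a = fun i : Fin n => b i :=
    ⟨fun k => if h : k < n then a ⟨k, h⟩ else 0, funext fun i => by simp⟩
  have hIio (i : Fin n) : ∑ j ∈ Iio i, b j = QDyson.partialSum b i := QDyson.sum_Iio_val b i
  have hIic (i : Fin n) : ∑ j ∈ Iic i, b j = QDyson.partialSum b (i + 1) := by
    rw [← Iio_insert, sum_insert notMem_Iio_self, hIio, QDyson.partialSum_succ, add_comm]
  have huniv : ∑ j : Fin n, b j = QDyson.partialSum b n := Fin.sum_univ_eq_sum_range b n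
  simp only [map_prod, map_mul, map_sub, eval_X, eval_C, hIio, hIic, huniv]
  have key := QDyson.eval_prod_pair_factors b n
  rw [← QDyson.prod_filter_fst_lt_snd] at key
  simpa only [sum_range, prod_range] using key

/-- Closed-form evaluation of the q-Dyson polynomial `F` at `(q^{σ₁}, …, q^{σₙ})`:
`F(q^{σ₁},…,q^{σₙ}) = (-1)^u q^v ∏ᵢ (q)_{σᵢ}(q)_{σ-σᵢ}/(q)_{aᵢ}` with
`u = ∑ᵢ (n-i)aᵢ` and `v = ∑ᵢ [(n-i)aᵢσᵢ + (n-i)C(aᵢ,2) + σᵢ(σ-σ_{i+1})]`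
(zero-based indexing: `n - i` becomes `n - 1 - i`). -/
theorem q_dyson_F_eval
    (n : ℕ) (a : Fin n → ℕ) (ha : ∀ i, 0 < a i) :
    MvPolynomial.eval (fun i => (RatFunc.X : RatFunc ℚ) ^ (∑ j ∈ Finset.Iio i, a j))
        (∏ p ∈ Finset.univ.filter (fun p : Fin n × Fin n => p.1 < p.2),
          ((∏ t ∈ Finset.range (a p.1), (X p.2 - C ((RatFunc.X : RatFunc ℚ) ^ t) * X p.1)) *
           (∏ t ∈ Finset.range (a p.2), (X p.1 - C ((RatFunc.X : RatFunc ℚ) ^ (t + 1)) * X p.2)))) =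
      (-1) ^ (∑ i : Fin n, (n - 1 - (i : ℕ)) * a i) *
        (RatFunc.X : RatFunc ℚ) ^
          (∑ i : Fin n,
            ((n - 1 - (i : ℕ)) * (a i * (∑ j ∈ Finset.Iio i, a j)) +
              (n - 1 - (i : ℕ)) * (a i).choose 2 +
              (∑ j ∈ Finset.Iio i, a j) * ((∑ j, a j) - (∑ j ∈ Finset.Iic i, a j)))) *
        ∏ i : Fin n,
          (qPoch (∑ j ∈ Finset.Iio i, a j) * qPoch ((∑ j, a j) - (∑ j ∈ Finset.Iio i, a j)) /
            qPoch (a i)) :=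
  q_dyson_F_eval_general n a
end

section
/- Let a₁,…,aₙ be nonnegative integers. The constant term of ∏_{1≤i≠j≤n} (1 − xᵢ/x_j)^{aᵢ} equals the multinomial coefficient (a₁+a₂+⋯+aₙ)!/(a₁!a₂!⋯aₙ!). -/
open Finset

/-- The ring of Laurent polynomials in `n` variables over `ℚ`. -/
noncomputable abbrev qLaurent (n : ℕ) : Type :=
  AddMonoidAlgebra ℚ (Fin n →₀ ℤ)

/-- The Laurent monomial `c · x₁^{m₁}⋯xₙ^{mₙ}`. -/
noncomputable def lmono {n : ℕ} (m : Fin n →₀ ℤ) (c : ℚ) : qLaurent n :=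
  AddMonoidAlgebra.ofCoeff (Finsupp.single m c)

/-!
Good's proof. Write `F_S(a) = ∏_{i ≠ j ∈ S} (1 - xᵢ/xⱼ)^{aᵢ}`. If every `aₖ` with `k ∈ S` is
positive, the Lagrange interpolation identity `∑ₖ ∏_{j ≠ k} xⱼ/(xⱼ - xₖ) = 1`, evaluated in the
fraction field, gives `F_S(a) = ∑ₖ F_S(a - eₖ)`: the Pascal recursion of the multinomial
coefficients. If `aₖ = 0`, then `F_S(a)` is `F_{S \ {k}}(a)`, which is free of `xₖ`, times
`∏ᵢ (1 - xᵢ/xₖ)^{aᵢ}`, which is `1` plus terms of negative degree in `xₖ`; so the constant term is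
that of `F_{S \ {k}}(a)`. Induction on `#S + ∑ aᵢ` finishes the proof.
-/

open scoped Pointwise

namespace Nat

theorem prod_factorial_eq_mul_prod_factorial_update_pred {α : Type*} [DecidableEq α]
    {s : Finset α} {f : α → ℕ} {k : α} (hk : k ∈ s) (hfk : f k ≠ 0) :
    ∏ i ∈ s, (f i)! = f k * ∏ i ∈ s, (Function.update f k (f k - 1) i)! := by
  rw [← Finset.mul_prod_erase s _ hk, ← Finset.mul_prod_erase s _ hk, Function.update_self,
    ← mul_assoc, mul_factorial_pred hfk]
  congr 1
  exact Finset.prod_congr rfl fun i hi => by rw [Function.update_of_ne (Finset.ne_of_mem_erase hi)]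

theorem multinomial_eq_sum_update_pred {α : Type*} [DecidableEq α] {s : Finset α} {f : α → ℕ}
    (hs : s.Nonempty) (hf : ∀ i ∈ s, f i ≠ 0) :
    multinomial s f = ∑ k ∈ s, multinomial s (Function.update f k (f k - 1)) := by
  have hsum : ∑ i ∈ s, f i ≠ 0 := by
    obtain ⟨k, hk⟩ := hs
    exact fun h => hf k hk (Finset.sum_eq_zero_iff.mp h k hk)
  have hprod : ∏ i ∈ s, (f i)! ≠ 0 := Finset.prod_ne_zero_iff.mpr fun i _ => factorial_ne_zero (f i)
  refine mul_left_cancel₀ hprod ?_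
  calc (∏ i ∈ s, (f i)!) * multinomial s f
      = (∑ k ∈ s, f k) * (∑ i ∈ s, f i - 1)! := by
        rw [multinomial_spec, mul_factorial_pred hsum]
    _ = ∑ k ∈ s, (∏ i ∈ s, (f i)!) * multinomial s (Function.update f k (f k - 1)) := by
        rw [Finset.sum_mul]
        refine Finset.sum_congr rfl fun k hk => ?_
        rw [prod_factorial_eq_mul_prod_factorial_update_pred hk (hf k hk), mul_assoc,
          multinomial_spec, Finset.sum_update_of_mem hk, Finset.sdiff_singleton_eq_erase,
          ← Finset.add_sum_erase s f hk]
        congr 2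
        have := hf k hk
        omega
    _ = _ := by rw [Finset.mul_sum]

end Nat

theorem Lagrange.sum_prod_div_sub_eq_one {F ι : Type*} [Field F] [DecidableEq ι] {s : Finset ι}
    {v : ι → F} (hvs : Set.InjOn v s) (hs : s.Nonempty) :
    ∑ k ∈ s, ∏ j ∈ s.erase k, v j / (v j - v k) = 1 := by
  have := congrArg (Polynomial.eval 0) (Lagrange.sum_basis hvs hs)
  rw [Polynomial.eval_finsetSum, Polynomial.eval_one] at this
  rw [← this]
  refine Finset.sum_congr rfl fun k hk => ?_
  rw [Lagrange.basis, Polynomial.eval_prod]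
  refine Finset.prod_congr rfl fun j hj => ?_
  simp only [Lagrange.basisDivisor, Polynomial.eval_mul, Polynomial.eval_C, Polynomial.eval_sub,
    Polynomial.eval_X, zero_sub]
  rw [div_eq_inv_mul, ← neg_sub, inv_neg]; ring

namespace AddMonoidAlgebra

variable {R M : Type*}

theorem mul_mem_supported_add [Semiring R] [AddMonoid M] {s t : Set M} {x y : R[M]}
    (hx : x ∈ supported R R s) (hy : y ∈ supported R R t) : x * y ∈ supported R R (s + t) := by
  classical
  rw [mem_supported] at *
  grw [support_coeff_mul_subset x y, Finset.coe_add, hx, hy]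

section Ring

variable [Ring R] [AddMonoid M]

variable (R) in
def oneAddNegDegree (d : M →+ ℤ) : Submonoid R[M] where
  carrier := {f | f - 1 ∈ supported R R {m | d m < 0}}
  one_mem' := by simp
  mul_mem' {f g} hf hg := by
    have hsub : {m | d m < 0} + {m | d m < 0} ⊆ {m | d m < 0} := by
      rintro _ ⟨m, hm, m', hm', rfl⟩
      simp only [Set.mem_ofPred_eq, map_add] at *
      omega
    have : f * g - 1 = (f - 1) * (g - 1) + (f - 1) + (g - 1) := by noncomm_ring
    simp only [Set.mem_ofPred_eq, this]
    exact add_mem (add_mem (supported_mono hsub (mul_mem_supported_add hf hg)) hf) hg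

theorem one_sub_single_mem_oneAddNegDegree {d : M →+ ℤ} {m : M} (hm : d m < 0) (r : R) :
    1 - single m r ∈ oneAddNegDegree R d := by
  change (1 - single m r) - 1 ∈ supported R R {m | d m < 0}
  rw [sub_sub_cancel_left, neg_mem_iff, mem_supported]
  exact (Finset.coe_subset.2 Finsupp.support_single_subset).trans (by simpa using hm)

end Ring

theorem coeff_zero_mul_of_mem_oneAddNegDegree [CommRing R] [AddMonoid M] {d : M →+ ℤ}
    {x y : R[M]} (hx : x ∈ gradeBy R d 0) (hy : y ∈ oneAddNegDegree R d) : (x * y).coeff 0 = x.coeff 0 := by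
  have hsub : d ⁻¹' {0} + {m | d m < 0} ⊆ {m | d m < 0} := by
    rintro _ ⟨m, hm, m', hm', rfl⟩
    simp only [Set.mem_ofPred_eq, Set.mem_preimage, Set.mem_singleton_iff, map_add] at *
    omega
  have hneg : x * (y - 1) ∈ supported R R {m | d m < 0} :=
    supported_mono hsub (mul_mem_supported_add ((mem_gradeBy_iff R d 0 x).mp hx) hy)
  have : x * y = x + x * (y - 1) := by rw [mul_sub, mul_one, add_sub_cancel]
  rw [this, coeff_add, Finsupp.add_apply, (mem_supported'.mp hneg) 0 (by simp), add_zero]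

end AddMonoidAlgebra

namespace Dyson

variable {n : ℕ}

noncomputable def X (i : Fin n) : qLaurent n := lmono (Finsupp.single i 1) 1

noncomputable def xDiv (i j : Fin n) : qLaurent n :=
  lmono (Finsupp.single i 1 - Finsupp.single j 1) 1

noncomputable def dysonProd (S : Finset (Fin n)) (a : Fin n → ℕ) : qLaurent n :=
  ∏ p ∈ S.offDiag, (1 - xDiv p.1 p.2) ^ a p.1

theorem X_ne_zero (i : Fin n) : X i ≠ 0 := by
  simp [X, lmono]

theorem X_injective : Function.Injective (X : Fin n → qLaurent n) :=
  (AddMonoidAlgebra.single_left_injective one_ne_zero).comp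
    (Finsupp.single_left_injective one_ne_zero)

theorem xDiv_mul_X (i j : Fin n) : xDiv i j * X j = X i := by
  change AddMonoidAlgebra.single _ _ * AddMonoidAlgebra.single _ _ = AddMonoidAlgebra.single _ _
  rw [AddMonoidAlgebra.single_mul_single, sub_add_cancel, one_mul]

theorem dysonProd_congr {S : Finset (Fin n)} {a b : Fin n → ℕ} (h : ∀ i ∈ S, a i = b i) :
    dysonProd S a = dysonProd S b :=
  Finset.prod_congr rfl fun p hp => by rw [h p.1 (Finset.mem_offDiag.mp hp).1]

theorem dysonProd_insert {T : Finset (Fin n)} {k : Fin n} (hk : k ∉ T) (a : Fin n → ℕ) :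
    dysonProd (insert k T) a =
      dysonProd T a * (∏ j ∈ T, (1 - xDiv k j)) ^ a k * ∏ i ∈ T, (1 - xDiv i k) ^ a i := by
  have h₁ : Disjoint T.offDiag ({k} ×ˢ T) := by
    rw [Finset.disjoint_left]
    rintro ⟨i, j⟩ hij hkj
    simp only [Finset.mem_offDiag, Finset.mem_product, Finset.mem_singleton] at hij hkj
    exact hk (hkj.1 ▸ hij.1)
  have h₂ : Disjoint (T.offDiag ∪ {k} ×ˢ T) (T ×ˢ {k}) := by
    rw [Finset.disjoint_left]
    rintro ⟨i, j⟩ hij hik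
    simp only [mem_union, mem_offDiag, mem_product, mem_singleton] at hij hik
    grind
  rw [dysonProd, Finset.offDiag_insert hk, Finset.prod_union h₂, Finset.prod_union h₁,
    Finset.singleton_product, Finset.product_singleton, Finset.prod_map, Finset.prod_map,
    ← Finset.prod_pow]
  rfl

theorem dysonProd_eq_mul {S : Finset (Fin n)} {k : Fin n} (hk : k ∈ S) {a : Fin n → ℕ}
    (hak : a k ≠ 0) :
    dysonProd S a =
      dysonProd S (Function.update a k (a k - 1)) * ∏ j ∈ S.erase k, (1 - xDiv k j) := by
  obtain ⟨T, hkT, rfl⟩ : ∃ T, k ∉ T ∧ S = insert k T :=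
    ⟨S.erase k, S.notMem_erase k, (S.insert_erase hk).symm⟩
  have hupd : ∀ i ∈ T, Function.update a k (a k - 1) i = a i :=
    fun i hi => Function.update_of_ne (ne_of_mem_of_not_mem hi hkT) _ _
  have hcol : ∏ i ∈ T, (1 - xDiv i k) ^ Function.update a k (a k - 1) i =
      ∏ i ∈ T, (1 - xDiv i k) ^ a i :=
    Finset.prod_congr rfl fun i hi => by rw [hupd i hi]
  obtain ⟨m, hm⟩ := Nat.exists_eq_succ_of_ne_zero hak
  rw [Finset.erase_insert hkT, dysonProd_insert hkT, dysonProd_insert hkT, dysonProd_congr hupd,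
    hcol, Function.update_self, hm, Nat.succ_sub_one, pow_succ]
  ring

theorem coeff_zero_dysonProd_insert_of_eq_zero {T : Finset (Fin n)} {k : Fin n} (hk : k ∉ T)
    {a : Fin n → ℕ} (hak : a k = 0) :
    (dysonProd (insert k T) a).coeff 0 = (dysonProd T a).coeff 0 := by
  let d : (Fin n →₀ ℤ) →+ ℤ := Finsupp.applyAddHom k
  have hfree : dysonProd T a ∈ AddMonoidAlgebra.gradeBy ℚ d 0 := by
    change _ ∈ SetLike.GradeZero.subring (AddMonoidAlgebra.gradeBy ℚ d)
    refine prod_mem fun p hp => pow_mem (sub_mem (one_mem _) ?_) _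
    obtain ⟨hi, hj, -⟩ := Finset.mem_offDiag.mp hp
    show xDiv p.1 p.2 ∈ AddMonoidAlgebra.gradeBy ℚ d 0
    have : xDiv p.1 p.2 ∈
        AddMonoidAlgebra.gradeBy ℚ d (d (Finsupp.single p.1 1 - Finsupp.single p.2 1)) :=
      AddMonoidAlgebra.single_mem_gradeBy _ _ _
    simpa [d, ne_of_mem_of_not_mem hi hk, ne_of_mem_of_not_mem hj hk] using this
  have hneg : ∏ i ∈ T, (1 - xDiv i k) ^ a i ∈ AddMonoidAlgebra.oneAddNegDegree ℚ d := by
    refine prod_mem fun i hi => pow_mem (AddMonoidAlgebra.one_sub_single_mem_oneAddNegDegree ?_ _) _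
    simp [d, ne_of_mem_of_not_mem hi hk]
  rw [dysonProd_insert hk, hak, pow_zero, mul_one,
    AddMonoidAlgebra.coeff_zero_mul_of_mem_oneAddNegDegree hfree hneg]

theorem dysonProd_eq_sum_update {S : Finset (Fin n)} (hS : S.Nonempty) {a : Fin n → ℕ}
    (ha : ∀ i ∈ S, a i ≠ 0) :
    dysonProd S a = ∑ k ∈ S, dysonProd S (Function.update a k (a k - 1)) := by
  let φ := algebraMap (qLaurent n) (FractionRing (qLaurent n))
  have hφ : Function.Injective φ := IsFractionRing.injective _ _
  let v i := φ (X i)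
  have hv : Function.Injective v := hφ.comp X_injective
  have hv₀ i : v i ≠ 0 := (map_ne_zero_iff φ hφ).mpr (X_ne_zero i)
  have hfactor k j : φ (1 - xDiv k j) = (v j - v k) / v j := by
    rw [eq_div_iff (hv₀ j), ← map_mul, sub_mul, one_mul, xDiv_mul_X, map_sub]
  apply hφ
  calc φ (dysonProd S a)
      = φ (dysonProd S a) * ∑ k ∈ S, ∏ j ∈ S.erase k, v j / (v j - v k) := by
        rw [Lagrange.sum_prod_div_sub_eq_one hv.injOn hS, mul_one]
    _ = φ (∑ k ∈ S, dysonProd S (Function.update a k (a k - 1))) := by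
        rw [Finset.mul_sum, map_sum]
        refine Finset.sum_congr rfl fun k hk => ?_
        have hinv :
            φ (∏ j ∈ S.erase k, (1 - xDiv k j)) * ∏ j ∈ S.erase k, v j / (v j - v k) = 1 := by
          rw [map_prod, ← Finset.prod_mul_distrib]
          refine Finset.prod_eq_one fun j hj => ?_
          have hjk : v j - v k ≠ 0 := sub_ne_zero.mpr (hv.ne (Finset.ne_of_mem_erase hj))
          rw [hfactor]
          field_simp [hv₀ j]
        rw [dysonProd_eq_mul hk (ha k hk), map_mul, mul_assoc, hinv, mul_one]

theorem coeff_zero_dysonProd (S : Finset (Fin n)) (a : Fin n → ℕ) :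
    (dysonProd S a).coeff 0 = Nat.multinomial S a := by
  induction hN : #S + ∑ i ∈ S, a i using Nat.strong_induction_on generalizing S a with
  | _ N ih =>
  subst hN
  rcases S.eq_empty_or_nonempty with rfl | hS
  · simp [dysonProd]
  by_cases h₀ : ∃ k ∈ S, a k = 0
  · obtain ⟨k, hk, hak⟩ := h₀
    rw [← Finset.insert_erase hk, coeff_zero_dysonProd_insert_of_eq_zero (S.notMem_erase k) hak,
      ih _ ?_ _ _ rfl, Nat.multinomial_insert (S.notMem_erase k), hak]
    · simp
    · have := Finset.card_erase_lt_of_mem hk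
      rw [Finset.sum_erase S hak]
      omega
  · push Not at h₀
    rw [dysonProd_eq_sum_update hS h₀, AddMonoidAlgebra.coeff_sum, Finsupp.finsetSum_apply,
      Nat.multinomial_eq_sum_update_pred hS h₀, Nat.cast_sum]
    refine Finset.sum_congr rfl fun k hk => ih _ ?_ _ _ rfl
    have := h₀ k hk
    rw [Finset.sum_update_of_mem hk, Finset.sdiff_singleton_eq_erase, ← Finset.add_sum_erase S a hk]
    omega

end Dyson

/-- Dyson's conjecture (Gunson, Wilson, Good): the constant term of
`∏_{i≠j} (1 - xᵢ/x_j)^{aᵢ}` equals the multinomial coefficient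
`(a₁+⋯+aₙ)! / (a₁!⋯aₙ!)`. -/
theorem dyson_conjecture (n : ℕ) (a : Fin n → ℕ) :
    (∏ p ∈ Finset.univ.filter (fun p : Fin n × Fin n => p.1 ≠ p.2),
        (1 - lmono (Finsupp.single p.1 1 - Finsupp.single p.2 1) 1) ^ (a p.1) : qLaurent n).coeff 0 =
      ((∑ i, a i).factorial : ℚ) / ∏ i, ((a i).factorial : ℚ) := by
  have hoff : univ.filter (fun p : Fin n × Fin n => p.1 ≠ p.2) = univ.offDiag := by
    ext; simp
  rw [hoff]
  refine (Dyson.coeff_zero_dysonProd univ a).trans ?_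
  rw [eq_div_iff (by positivity)]
  exact_mod_cast (mul_comm _ _).trans (Nat.multinomial_spec univ a)
end
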